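/- Let N, M, ℓ ≥ 1, set s = 2ℓ − 1, n = s·N and m = s·M, and let f, f̃ : ℝ × ℝ → ℝ. Define I^res ∈ ℝ^{N×M} by I^res_{k,h} = f(x_k^N, x_h^M), I^out ∈ ℝ^{N×M} by I^out_{k,h} = L_{n,m}f̃(x_k^N, x_h^M), I ∈ ℝ^{n×m} by I_{i,j} = f(x_i^n, x_j^m) and I^in ∈ ℝ^{n×m} by I^in_{i,j} = f̃(x_i^n, x_j^m). Then the mean squared errors satisfy MSE(I^res, I^out) ≤ s² · MSE(I, I^in), i.e. (1/(N·M)) Σ_{k=1}^{N} Σ_{h=1}^{M} (I^res_{k,h} − I^out_{k,h})² ≤ s² · (1/(n·m)) Σ_{i=1}^{n} Σ_{j=1}^{m} (I_{i,j} − I^in_{i,j})². -/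

import Mathlib

open Real Finset

/-- First-kind Chebyshev node of order `μ` at index `k`: `cos((2k-1)π/(2μ))`. -/
noncomputable def chebNode (μ k : ℕ) : ℝ :=
  Real.cos ((2 * (k : ℝ) - 1) * Real.pi / (2 * (μ : ℝ)))

/-- `k`-th fundamental Lagrange polynomial on the first-kind Chebyshev nodes of order `μ`. -/
noncomputable def lagrangeFund (μ k : ℕ) (ξ : ℝ) : ℝ :=
  ∏ s ∈ (Finset.Icc 1 μ).erase k, (ξ - chebNode μ s) / (chebNode μ k - chebNode μ s)

/-- Bivariate tensor-product Lagrange–Chebyshev interpolation polynomial `L_{n,m} g`. -/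
noncomputable def lagrangeCheb (n m : ℕ) (g : ℝ × ℝ → ℝ) (x y : ℝ) : ℝ :=
  ∑ i ∈ Finset.Icc 1 n, ∑ j ∈ Finset.Icc 1 m,
    g (chebNode n i, chebNode m j) * lagrangeFund n i x * lagrangeFund m j y

/-!
For odd `s = 2ℓ - 1` the Chebyshev grid of order `μ` is a subgrid of the one of order `sμ`:
`(2k - 1)π/(2μ) = s(2k - 1)π/(2sμ)` and `s(2k - 1) = 2(sk - (ℓ - 1)) - 1` is again odd. Since
`L_{n,m} f̃` interpolates `f̃` on the fine grid, the squared errors at the `NM` coarse nodes form a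
subfamily of the `nm = s²NM` squared errors at the fine nodes, which gives the bound after
normalising both sums.
-/

lemma Finset.sum_comp_le_sum_of_injOn {ι κ M : Type*} [AddCommMonoid M] [PartialOrder M]
    [IsOrderedAddMonoid M] {s : Finset ι} {t : Finset κ} {e : ι → κ} {g : κ → M}
    (he : Set.InjOn e s) (hst : ∀ i ∈ s, e i ∈ t) (hg : ∀ j ∈ t, 0 ≤ g j) :
    ∑ i ∈ s, g (e i) ≤ ∑ j ∈ t, g j := by
  classical
  rw [← sum_image he]
  exact sum_le_sum_of_subset_of_nonneg (image_subset_iff.2 hst) fun j hj _ => hg j hj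

section Interpolation

variable {μ : ℕ}

lemma chebNode_angle_mem_Icc {k : ℕ} (hk : k ∈ Icc 1 μ) :
    (2 * (k : ℝ) - 1) * π / (2 * μ) ∈ Set.Icc 0 π := by
  obtain ⟨hk1, hkμ⟩ := mem_Icc.1 hk
  have hk1' : (1 : ℝ) ≤ k := by exact_mod_cast hk1
  have hkμ' : (k : ℝ) ≤ μ := by exact_mod_cast hkμ
  have hμ : (0 : ℝ) < 2 * μ := by linarith
  refine ⟨div_nonneg (mul_nonneg (by linarith) pi_pos.le) hμ.le, ?_⟩
  rw [div_le_iff₀ hμ]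
  nlinarith [pi_pos]

lemma chebNode_injOn : Set.InjOn (chebNode μ) (Icc 1 μ) := by
  intro k hk k' hk' h
  have hμ : (0 : ℝ) < 2 * μ := by
    have := (mem_Icc.1 hk).1.trans (mem_Icc.1 hk).2
    positivity
  have hangle := injOn_cos (chebNode_angle_mem_Icc hk) (chebNode_angle_mem_Icc hk') h
  rw [div_left_inj' hμ.ne', mul_left_inj' pi_pos.ne'] at hangle
  exact_mod_cast (by linarith : (k : ℝ) = k')

lemma lagrangeFund_chebNode {k j : ℕ} (hk : k ∈ Icc 1 μ) (hj : j ∈ Icc 1 μ) :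
    lagrangeFund μ k (chebNode μ j) = if j = k then 1 else 0 := by
  split_ifs with hjk
  · subst hjk
    refine prod_eq_one fun s hs => div_self (sub_ne_zero.2 fun h => ?_)
    exact (mem_erase.1 hs).1 (chebNode_injOn (mem_erase.1 hs).2 hj h.symm)
  · exact prod_eq_zero (mem_erase.2 ⟨hjk, hj⟩) (by rw [sub_self, zero_div])

lemma lagrangeCheb_chebNode {n m k h : ℕ} (hk : k ∈ Icc 1 n) (hh : h ∈ Icc 1 m)
    (g : ℝ × ℝ → ℝ) :
    lagrangeCheb n m g (chebNode n k) (chebNode m h) = g (chebNode n k, chebNode m h) := by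
  unfold lagrangeCheb
  rw [sum_eq_single_of_mem k hk fun i hi hik => sum_eq_zero fun j _ => by
      rw [lagrangeFund_chebNode hi hk, if_neg (Ne.symm hik)]; ring,
    sum_eq_single_of_mem h hh fun j hj hjh => by
      rw [lagrangeFund_chebNode hj hh, if_neg (Ne.symm hjh)]; ring,
    lagrangeFund_chebNode hk hk, lagrangeFund_chebNode hh hh, if_pos rfl, if_pos rfl]
  ring

end Interpolation

section Refinement

def fineIndex (ℓ k : ℕ) : ℕ := (2 * ℓ - 1) * k - (ℓ - 1)

variable {ℓ : ℕ}

lemma cast_two_mul_sub_one (hℓ : 1 ≤ ℓ) : ((2 * ℓ - 1 : ℕ) : ℝ) = 2 * ℓ - 1 := by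
  rw [Nat.cast_sub (by omega)]
  push_cast
  ring

lemma two_mul_sub_one_ne_zero (hℓ : 1 ≤ ℓ) : (2 * ℓ - 1 : ℝ) ≠ 0 :=
  cast_two_mul_sub_one hℓ ▸ Nat.cast_ne_zero.2 (by omega)

lemma fineIndex_strictMono (hℓ : 1 ≤ ℓ) : StrictMono (fineIndex ℓ) := by
  refine strictMono_nat_of_lt_succ fun k => ?_
  unfold fineIndex
  rw [Nat.mul_succ]
  omega

lemma fineIndex_mem_Icc {μ k : ℕ} (hℓ : 1 ≤ ℓ) (hk : k ∈ Icc 1 μ) :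
    fineIndex ℓ k ∈ Icc 1 ((2 * ℓ - 1) * μ) := by
  obtain ⟨hk1, hkμ⟩ := mem_Icc.1 hk
  have h1 := Nat.mul_le_mul_left (2 * ℓ - 1) hk1
  have h2 := Nat.mul_le_mul_left (2 * ℓ - 1) hkμ
  unfold fineIndex
  rw [mem_Icc]
  omega

lemma chebNode_fineIndex (μ : ℕ) {k : ℕ} (hℓ : 1 ≤ ℓ) (hk : 1 ≤ k) :
    chebNode ((2 * ℓ - 1) * μ) (fineIndex ℓ k) = chebNode μ k := by
  have hidx : 2 * (fineIndex ℓ k : ℝ) - 1 = (2 * ℓ - 1) * (2 * k - 1) := by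
    have h1 := Nat.mul_le_mul_left (2 * ℓ - 1) hk
    unfold fineIndex
    rw [Nat.cast_sub (by omega), Nat.cast_mul, cast_two_mul_sub_one hℓ, Nat.cast_sub hℓ]
    push_cast; ring
  unfold chebNode
  rw [hidx, Nat.cast_mul, cast_two_mul_sub_one hℓ, mul_assoc, mul_left_comm 2 (2 * (ℓ : ℝ) - 1),
    mul_div_mul_left _ _ (two_mul_sub_one_ne_zero hℓ)]

end Refinement

lemma sum_sq_sub_lagrangeCheb_le {ℓ : ℕ} (hℓ : 1 ≤ ℓ) (N M : ℕ) (f ft : ℝ × ℝ → ℝ) :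
    ∑ k ∈ Icc 1 N, ∑ h ∈ Icc 1 M,
        (f (chebNode N k, chebNode M h) -
          lagrangeCheb ((2 * ℓ - 1) * N) ((2 * ℓ - 1) * M) ft (chebNode N k) (chebNode M h)) ^ 2 ≤
      ∑ i ∈ Icc 1 ((2 * ℓ - 1) * N), ∑ j ∈ Icc 1 ((2 * ℓ - 1) * M),
        (f (chebNode ((2 * ℓ - 1) * N) i, chebNode ((2 * ℓ - 1) * M) j) -
          ft (chebNode ((2 * ℓ - 1) * N) i, chebNode ((2 * ℓ - 1) * M) j)) ^ 2 := by
  set g : ℕ × ℕ → ℝ := fun p =>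
    (f (chebNode ((2 * ℓ - 1) * N) p.1, chebNode ((2 * ℓ - 1) * M) p.2) -
      ft (chebNode ((2 * ℓ - 1) * N) p.1, chebNode ((2 * ℓ - 1) * M) p.2)) ^ 2
  have hcoarse : ∀ k ∈ Icc 1 N, ∀ h ∈ Icc 1 M,
      (f (chebNode N k, chebNode M h) -
        lagrangeCheb ((2 * ℓ - 1) * N) ((2 * ℓ - 1) * M) ft (chebNode N k) (chebNode M h)) ^ 2 =
      g (Prod.map (fineIndex ℓ) (fineIndex ℓ) (k, h)) := by
    intro k hk h hh
    rw [← chebNode_fineIndex N hℓ (mem_Icc.1 hk).1, ← chebNode_fineIndex M hℓ (mem_Icc.1 hh).1,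
      lagrangeCheb_chebNode (fineIndex_mem_Icc hℓ hk) (fineIndex_mem_Icc hℓ hh)]
    rfl
  rw [sum_congr rfl fun k hk => sum_congr rfl (hcoarse k hk)]
  have hinj := (fineIndex_strictMono hℓ).injective
  refine (sum_product (f := fun p => g (Prod.map (fineIndex ℓ) (fineIndex ℓ) p)) _ _).symm.trans_le
    ((sum_comp_le_sum_of_injOn (hinj.prodMap hinj).injOn ?_ fun _ _ => sq_nonneg _).trans_eq
      (sum_product (f := g) _ _))
  intro p hp
  rw [mem_product] at hp ⊢
  exact ⟨fineIndex_mem_Icc hℓ hp.1, fineIndex_mem_Icc hℓ hp.2⟩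

theorem mse_bound_general (N M ℓ : ℕ) (hℓ : 1 ≤ ℓ)
    (f ft : ℝ × ℝ → ℝ) :
    (1 / ((N : ℝ) * (M : ℝ))) *
        ∑ k ∈ Finset.Icc 1 N, ∑ h ∈ Finset.Icc 1 M,
          (f (chebNode N k, chebNode M h) -
            lagrangeCheb ((2 * ℓ - 1) * N) ((2 * ℓ - 1) * M) ft
              (chebNode N k) (chebNode M h)) ^ 2 ≤
      ((2 * (ℓ : ℝ) - 1)) ^ 2 *
        ((1 / ((((2 * ℓ - 1) * N : ℕ) : ℝ) * (((2 * ℓ - 1) * M : ℕ) : ℝ))) *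
          ∑ i ∈ Finset.Icc 1 ((2 * ℓ - 1) * N), ∑ j ∈ Finset.Icc 1 ((2 * ℓ - 1) * M),
            (f (chebNode ((2 * ℓ - 1) * N) i, chebNode ((2 * ℓ - 1) * M) j) -
              ft (chebNode ((2 * ℓ - 1) * N) i, chebNode ((2 * ℓ - 1) * M) j)) ^ 2) := by
  have hnorm : (2 * (ℓ : ℝ) - 1) ^ 2 * (1 / ((((2 * ℓ - 1) * N : ℕ) : ℝ) *
      (((2 * ℓ - 1) * M : ℕ) : ℝ))) = 1 / ((N : ℝ) * M) := by
    rw [Nat.cast_mul, Nat.cast_mul, cast_two_mul_sub_one hℓ, mul_mul_mul_comm, ← sq, one_div,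
      one_div, mul_inv, ← mul_assoc, mul_inv_cancel₀ (pow_ne_zero 2 (two_mul_sub_one_ne_zero hℓ)),
      one_mul]
  rw [← mul_assoc, hnorm]
  exact mul_le_mul_of_nonneg_left (sum_sq_sub_lagrangeCheb_le hℓ N M f ft) (by positivity)

/-- for odd scale factor `s = 2ℓ - 1`, the mean squared error of the d-LCI output
against the target resized image is bounded by `s²` times the MSE of the input data. -/
theorem mse_bound (N M ℓ : ℕ) (hN : 1 ≤ N) (hM : 1 ≤ M) (hℓ : 1 ≤ ℓ)
    (f ft : ℝ × ℝ → ℝ) :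
    (1 / ((N : ℝ) * (M : ℝ))) *
        ∑ k ∈ Finset.Icc 1 N, ∑ h ∈ Finset.Icc 1 M,
          (f (chebNode N k, chebNode M h) -
            lagrangeCheb ((2 * ℓ - 1) * N) ((2 * ℓ - 1) * M) ft
              (chebNode N k) (chebNode M h)) ^ 2 ≤
      ((2 * (ℓ : ℝ) - 1)) ^ 2 *
        ((1 / ((((2 * ℓ - 1) * N : ℕ) : ℝ) * (((2 * ℓ - 1) * M : ℕ) : ℝ))) *
          ∑ i ∈ Finset.Icc 1 ((2 * ℓ - 1) * N), ∑ j ∈ Finset.Icc 1 ((2 * ℓ - 1) * M),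
            (f (chebNode ((2 * ℓ - 1) * N) i, chebNode ((2 * ℓ - 1) * M) j) -
              ft (chebNode ((2 * ℓ - 1) * N) i, chebNode ((2 * ℓ - 1) * M) j)) ^ 2) :=
  mse_bound_general N M ℓ hℓ f ft
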